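/- arXiv:1509.04639 — 4 statements merged into one kernel-verified Lean document; each statement's English description precedes it below -/
import Mathlib

section
/- Let p_I, p_J be rationals with 0 < p_J < p_I/2, and let n be a positive integer. Then the function f(k) = p_J·k + p_I·⌊(1 + n - k)/2⌋ defined for integers 0 ≤ k ≤ n - 1 attains its minimum over this range at k = n - 1. -/
/-!
Since `⌊1 + m/2⌋ ≥ (m + 1)/2` for every integer `m`, moving from `k = n - 1` down to
`k = n - 1 - j` saves `j·p_J` of jamming cost but raises the injection cost by at least
`p_I·j/2`, which is no less when `2·p_J ≤ p_I`.
-/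

section

variable {K : Type*} [Field K] [LinearOrder K] [IsStrictOrderedRing K] [FloorRing K]

theorem Int.add_one_le_two_mul_floor_one_add_half (m : ℤ) :
    m + 1 ≤ 2 * ⌊1 + (m : K) / 2⌋ := by
  have h : 1 + (m : K) / 2 - 1 < ⌊1 + (m : K) / 2⌋ := Int.sub_one_lt_floor _
  have h' : ((m : ℤ) : K) < ((2 * ⌊1 + (m : K) / 2⌋ : ℤ) : K) := by push_cast; linarith
  exact_mod_cast h'

theorem mul_sub_one_le_mul_floor_one_add_half_sub_one {pI pJ : K} (hpI : 0 ≤ pI)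
    (hJI : 2 * pJ ≤ pI) {m : ℤ} (hm : 1 ≤ m) :
    pJ * ((m : K) - 1) ≤ pI * ((⌊1 + (m : K) / 2⌋ : K) - 1) := by
  have hfloor : ((m : K) + 1) ≤ 2 * (⌊1 + (m : K) / 2⌋ : K) := by
    exact_mod_cast Int.add_one_le_two_mul_floor_one_add_half (K := K) m
  have hm' : (0 : K) ≤ (m : K) - 1 := by
    have : (1 : K) ≤ m := by exact_mod_cast hm
    linarith
  calc pJ * ((m : K) - 1) ≤ pI / 2 * ((m : K) - 1) := by gcongr; linarith
    _ ≤ pI * ((⌊1 + (m : K) / 2⌋ : K) - 1) := by nlinarith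

end

theorem stmt_1_general (pI pJ : ℚ) (hJ0 : 0 < pJ) (hJI : pJ < pI / 2) (n : ℤ) :
    ∀ k : ℤ, 0 ≤ k → k ≤ n - 1 →
      pJ * ((n : ℚ) - 1) + pI * ((⌊1 + (((n : ℚ) - ((n : ℚ) - 1)) / 2)⌋ : ℤ) : ℚ) ≤
        pJ * (k : ℚ) + pI * ((⌊1 + (((n : ℚ) - (k : ℚ)) / 2)⌋ : ℤ) : ℚ) := by
  intro k _ hk
  have hlast : ⌊1 + (((n : ℚ) - ((n : ℚ) - 1)) / 2)⌋ = 1 := by norm_num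
  have hgap := mul_sub_one_le_mul_floor_one_add_half_sub_one (by linarith : (0 : ℚ) ≤ pI)
    (by linarith : 2 * pJ ≤ pI) (by omega : 1 ≤ n - k)
  push_cast at hgap
  rw [hlast]
  push_cast
  linarith

/-- When jamming is cheap (`0 < p_J < p_I/2`), the cost
`f(k) = p_J·k + p_I·⌊1 + (n - k)/2⌋` over integers `0 ≤ k ≤ n - 1`
attains its minimum at `k = n - 1`. -/
theorem stmt_1 (pI pJ : ℚ) (hJ0 : 0 < pJ) (hJI : pJ < pI / 2) (n : ℤ) (hn : 1 ≤ n) :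
    ∀ k : ℤ, 0 ≤ k → k ≤ n - 1 →
      pJ * ((n : ℚ) - 1) + pI * ((⌊1 + (((n : ℚ) - ((n : ℚ) - 1)) / 2)⌋ : ℤ) : ℚ) ≤
        pJ * (k : ℚ) + pI * ((⌊1 + (((n : ℚ) - (k : ℚ)) / 2)⌋ : ℤ) : ℚ) :=
  stmt_1_general pI pJ hJ0 hJI n
end

section
/- Let p_I, p_J be rationals with p_I/2 ≤ p_J ≤ p_I, and let m be a nonnegative integer. Then the function f(k) = p_J·k + p_I·⌊(1 + m - k)/2⌋ over integers 0 ≤ k ≤ m attains its minimum at k = 1 - (m mod 2), i.e., at k = 0 if m is odd and k = 1 if m is even. -/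
/-! The point `a = 1 - m % 2` is the smallest `k ≥ 0` for which `m - k` is odd. Moving `k` up from
`a` by `d` costs `p_J d` in jamming but saves at most `p_I d / 2` in injection, since halving an odd
number loses exactly `1/2` and halving any integer loses at most `1/2`; as `p_I ≤ 2 p_J` this never
pays off. The only `k` below `a` is `k = 0` for even `m`, where trading one jammed measurement for
one injected one changes the cost by `p_I - p_J ≥ 0`. -/

section

variable {K : Type*} [Field K] [LinearOrder K] [IsStrictOrderedRing K]

theorem Int.floor_one_add_sub_div_two [FloorRing K] (m k : ℤ) :
    ⌊1 + ((m : K) - k) / 2⌋ = (m - k) / 2 + 1 := by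
  rw [← Int.cast_sub, add_comm, Int.floor_add_one]
  simpa using Int.floor_div_natCast ((m - k : ℤ) : K) 2

theorem jamming_cost_le_of_parity {pI pJ : K} (h1 : pI / 2 ≤ pJ) (h2 : pJ ≤ pI) {m k : ℤ}
    (hk : 0 ≤ k) :
    pJ * ((1 - m % 2 : ℤ) : K) + pI * (((m - (1 - m % 2)) / 2 : ℤ) : K) ≤
      pJ * k + pI * (((m - k) / 2 : ℤ) : K) := by
  set a : ℤ := 1 - m % 2 with ha
  rcases le_or_gt a k with hak | hka
  · have hA : 2 * ((m - a) / 2) = m - a - 1 := by omega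
    have hB : m - k - 1 ≤ 2 * ((m - k) / 2) := by omega
    have hAq : 2 * (((m - a) / 2 : ℤ) : K) = m - a - 1 := by exact_mod_cast hA
    have hBq : (m : K) - k - 1 ≤ 2 * (((m - k) / 2 : ℤ) : K) := by exact_mod_cast hB
    have hakq : (a : K) ≤ k := by exact_mod_cast hak
    nlinarith [mul_nonneg (sub_nonneg.2 hakq) (by linarith : (0 : K) ≤ 2 * pJ - pI)]
  · obtain ⟨rfl, ha1⟩ : k = 0 ∧ a = 1 := by omega
    have hdiv : (m - a) / 2 = (m - 0) / 2 - 1 := by omega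
    rw [hdiv, ha1]
    push_cast
    linarith

end

theorem stmt_2_general (pI pJ : ℚ) (h1 : pI / 2 ≤ pJ) (h2 : pJ ≤ pI)
    (m : ℤ) :
    ∀ k : ℤ, 0 ≤ k → k ≤ m →
      pJ * ((1 - m % 2 : ℤ) : ℚ) +
          pI * ((⌊1 + (((m : ℚ) - ((1 - m % 2 : ℤ) : ℚ)) / 2)⌋ : ℤ) : ℚ) ≤
        pJ * (k : ℚ) + pI * ((⌊1 + (((m : ℚ) - (k : ℚ)) / 2)⌋ : ℤ) : ℚ) := by
  intro k hk _
  rw [Int.floor_one_add_sub_div_two, Int.floor_one_add_sub_div_two]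
  have hcost := jamming_cost_le_of_parity h1 h2 (m := m) hk
  push_cast at hcost ⊢
  linarith

/-- When `p_I/2 ≤ p_J ≤ p_I`, the cost `f(k) = p_J·k + p_I·⌊1 + (m - k)/2⌋`
over integers `0 ≤ k ≤ m` attains its minimum at `k = 1 - (m mod 2)`. -/
theorem stmt_2 (pI pJ : ℚ) (h1 : pI / 2 ≤ pJ) (h2 : pJ ≤ pI) (h3 : 0 < pJ)
    (m : ℤ) (hm : 0 ≤ m) :
    ∀ k : ℤ, 0 ≤ k → k ≤ m →
      pJ * ((1 - m % 2 : ℤ) : ℚ) +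
          pI * ((⌊1 + (((m : ℚ) - ((1 - m % 2 : ℤ) : ℚ)) / 2)⌋ : ℤ) : ℚ) ≤
        pJ * (k : ℚ) + pI * ((⌊1 + (((m : ℚ) - (k : ℚ)) / 2)⌋ : ℤ) : ℚ) :=
  stmt_2_general pI pJ h1 h2 m
end

section
/- Let p_I, p_J^S, p_J^{Sc} be rationals with p_J^{Sc} < p_I/2 ≤ p_J^S and p_J^S + p_J^{Sc} ≥ p_I fails, i.e., assume p_J^S + p_J^{Sc} < p_I. Then the detectable generalized attack cost minimized over the number of injected edges equals the hidden generalized attack cost: for any cut with s secure and t ≥ 1 insecure edges, the minimum of g(k) = (p_J^S + p_J^{Sc} − p_I)k + (p_I − p_J^{Sc})(s+1) + p_J^{Sc}·t over max(0, s−t+1) ≤ k ≤ s equals p_J^S·s + p_J^{Sc}·t + (p_I − p_J^{Sc}), which is the hidden-attack cost of the same cut. -/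
/-! The detectable cost `g` is affine in `k` with slope `p_J^S + p_J^{Sc} - p_I < 0`, so its minimum
over the interval is attained at the right endpoint `k = s`, where it equals the hidden cost. -/

theorem antitone_affine_of_nonpos {R : Type*} [Ring R] [PartialOrder R] [IsOrderedRing R]
    {a : R} (ha : a ≤ 0) (b : R) : Antitone fun k : ℤ => a * (k : R) + b := fun _ _ hkl => by
  simpa using mul_le_mul_of_nonpos_left (Int.cast_mono hkl) ha

theorem stmt_15_general (pI pJS pJSc : ℚ)
    (h3 : pJS + pJSc < pI) (s t : ℤ) (hs : 0 ≤ s) (ht : 1 ≤ t) :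
    IsLeast
      ((fun k : ℤ => (pJS + pJSc - pI) * (k : ℚ) + (pI - pJSc) * ((s : ℚ) + 1)
          + pJSc * (t : ℚ)) '' Set.Icc (max 0 (s - t + 1)) s)
      (pJS * (s : ℚ) + pJSc * (t : ℚ) + (pI - pJSc)) := by
  have hg : Antitone fun k : ℤ => (pJS + pJSc - pI) * (k : ℚ) + (pI - pJSc) * ((s : ℚ) + 1)
      + pJSc * (t : ℚ) := by
    simpa only [add_assoc] using
      antitone_affine_of_nonpos (by linarith) ((pI - pJSc) * ((s : ℚ) + 1) + pJSc * (t : ℚ))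
  have hright : IsGreatest (Set.Icc (max 0 (s - t + 1)) s) s :=
    isGreatest_Icc (max_le hs (by omega))
  have hvalue : pJS * (s : ℚ) + pJSc * (t : ℚ) + (pI - pJSc)
      = (pJS + pJSc - pI) * (s : ℚ) + (pI - pJSc) * ((s : ℚ) + 1) + pJSc * (t : ℚ) := by ring
  rw [hvalue]
  exact hg.map_isGreatest hright

/-- In Cost Interval III (`p_J^{Sc} < p_I/2 ≤ p_J^S`, `p_J^S + p_J^{Sc} < p_I`),
the minimum over `max 0 (s-t+1) ≤ k ≤ s` of the detectable generalized attack
cost `g(k)` equals the hidden generalized attack cost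
`p_J^S·s + p_J^{Sc}·t + (p_I - p_J^{Sc})` of the same cut. -/
theorem stmt_15 (pI pJS pJSc : ℚ) (h1 : pJSc < pI / 2) (h2 : pI / 2 ≤ pJS)
    (h3 : pJS + pJSc < pI) (s t : ℤ) (hs : 0 ≤ s) (ht : 1 ≤ t) :
    IsLeast
      ((fun k : ℤ => (pJS + pJSc - pI) * (k : ℚ) + (pI - pJSc) * ((s : ℚ) + 1)
          + pJSc * (t : ℚ)) '' Set.Icc (max 0 (s - t + 1)) s)
      (pJS * (s : ℚ) + pJSc * (t : ℚ) + (pI - pJSc)) :=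
  stmt_15_general pI pJS pJSc h3 s t hs ht
end

section
/- Let p_I, p_J^S, p_J^{Sc} be rationals with p_I/2 ≤ p_J^{Sc} ≤ p_J^S ≤ p_I, and consider f(k) = p_J^S·k + p_I·⌊(1 + m − k)/2⌋ + p_J^{Sc}·(1 − (m − k) mod 2) for integers k in [max(0, s − t + 1), s], where m = s + t, t ≥ 1. Then f is nondecreasing in k, so its minimum is attained at k = max(0, s − t + 1); in particular, when s < t the minimum is f(0). -/
/-- With `⌊·⌋` evaluated, this is the cost `f(k)` of jamming `k` secure edges of a cut with
`m` edges. -/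
def jammingCost (pI pJS pJSc : ℚ) (m k : ℤ) : ℚ :=
  pJS * k + pI * ((1 + m - k) / 2 : ℤ) + pJSc * (1 - (m - k) % 2 : ℤ)

lemma jammingCost_eq_floor (pI pJS pJSc : ℚ) (m k : ℤ) :
    jammingCost pI pJS pJSc m k =
      pJS * k + pI * (⌊(1 + (m : ℚ) - k) / 2⌋ : ℤ) + pJSc * (1 - (m - k) % 2 : ℤ) := by
  have hfloor : ⌊(1 + (m : ℚ) - k) / 2⌋ = (1 + m - k) / 2 := by
    exact_mod_cast Rat.floor_intCast_div_natCast (1 + m - k) 2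
  rw [hfloor, jammingCost]

/-- When `m - k` is even, one more jammed edge costs `p_J^S` and saves the `p_J^{Sc}` of the
parity term; when it is odd, it costs `p_J^S + p_J^{Sc}` and saves one `p_I`. -/
lemma jammingCost_le_succ {pI pJS pJSc : ℚ} (hIJSc : pI / 2 ≤ pJSc) (hJScJS : pJSc ≤ pJS)
    (m k : ℤ) : jammingCost pI pJS pJSc m k ≤ jammingCost pI pJS pJSc m (k + 1) := by
  unfold jammingCost
  rcases Int.emod_two_eq (m - k) with heven | hodd
  · have hhalf : (1 + m - (k + 1)) / 2 = (1 + m - k) / 2 := by omega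
    have hpar : (m - (k + 1)) % 2 = 1 := by omega
    rw [hhalf, hpar, heven]
    push_cast
    linarith
  · have hhalf : (1 + m - (k + 1)) / 2 = (1 + m - k) / 2 - 1 := by omega
    have hpar : (m - (k + 1)) % 2 = 0 := by omega
    rw [hhalf, hpar, hodd]
    push_cast
    linarith

lemma monotone_jammingCost {pI pJS pJSc : ℚ} (hIJSc : pI / 2 ≤ pJSc) (hJScJS : pJSc ≤ pJS)
    (m : ℤ) : Monotone (jammingCost pI pJS pJSc m) :=
  monotone_int_of_le_succ (jammingCost_le_succ hIJSc hJScJS m)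

theorem stmt_19_general (pI pJS pJSc : ℚ) (h1 : pI / 2 ≤ pJSc) (h2 : pJSc ≤ pJS)
    (s t : ℤ) :
    (∀ k k' : ℤ, max 0 (s - t + 1) ≤ k → k ≤ k' → k' ≤ s →
        pJS * (k : ℚ) + pI * ((⌊(1 + ((s + t : ℤ) : ℚ) - (k : ℚ)) / 2⌋ : ℤ) : ℚ) +
            pJSc * (((1 - (s + t - k) % 2 : ℤ)) : ℚ) ≤
          pJS * (k' : ℚ) + pI * ((⌊(1 + ((s + t : ℤ) : ℚ) - (k' : ℚ)) / 2⌋ : ℤ) : ℚ) +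
            pJSc * (((1 - (s + t - k') % 2 : ℤ)) : ℚ)) ∧
    (∀ k : ℤ, max 0 (s - t + 1) ≤ k → k ≤ s →
        pJS * ((max 0 (s - t + 1) : ℤ) : ℚ) +
            pI * ((⌊(1 + ((s + t : ℤ) : ℚ) - ((max 0 (s - t + 1) : ℤ) : ℚ)) / 2⌋ : ℤ) : ℚ) +
            pJSc * (((1 - (s + t - max 0 (s - t + 1)) % 2 : ℤ)) : ℚ) ≤
          pJS * (k : ℚ) + pI * ((⌊(1 + ((s + t : ℤ) : ℚ) - (k : ℚ)) / 2⌋ : ℤ) : ℚ) +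
            pJSc * (((1 - (s + t - k) % 2 : ℤ)) : ℚ)) ∧
    (s < t → max 0 (s - t + 1) = 0) := by
  have hmono := monotone_jammingCost h1 h2 (s + t)
  simp only [← jammingCost_eq_floor]
  refine ⟨fun k k' _ hkk' _ ↦ hmono hkk', fun k hk _ ↦ hmono hk, fun hst ↦ ?_⟩
  omega

/-- Cost Interval I (`p_I/2 ≤ p_J^{Sc} ≤ p_J^S ≤ p_I`): the cost
`f(k) = p_J^S·k + p_I·⌊(1 + m - k)/2⌋ + p_J^{Sc}·(1 - (m-k) mod 2)` with
`m = s + t` is nondecreasing on `[max 0 (s-t+1), s]`, so its minimum is at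
`k = max 0 (s-t+1)`; in particular when `s < t` the minimum is `f 0`. -/
theorem stmt_19 (pI pJS pJSc : ℚ) (h1 : pI / 2 ≤ pJSc) (h2 : pJSc ≤ pJS)
    (h3 : pJS ≤ pI) (s t : ℤ) (hs : 0 ≤ s) (ht : 1 ≤ t) :
    (∀ k k' : ℤ, max 0 (s - t + 1) ≤ k → k ≤ k' → k' ≤ s →
        pJS * (k : ℚ) + pI * ((⌊(1 + ((s + t : ℤ) : ℚ) - (k : ℚ)) / 2⌋ : ℤ) : ℚ) +
            pJSc * (((1 - (s + t - k) % 2 : ℤ)) : ℚ) ≤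
          pJS * (k' : ℚ) + pI * ((⌊(1 + ((s + t : ℤ) : ℚ) - (k' : ℚ)) / 2⌋ : ℤ) : ℚ) +
            pJSc * (((1 - (s + t - k') % 2 : ℤ)) : ℚ)) ∧
    (∀ k : ℤ, max 0 (s - t + 1) ≤ k → k ≤ s →
        pJS * ((max 0 (s - t + 1) : ℤ) : ℚ) +
            pI * ((⌊(1 + ((s + t : ℤ) : ℚ) - ((max 0 (s - t + 1) : ℤ) : ℚ)) / 2⌋ : ℤ) : ℚ) +
            pJSc * (((1 - (s + t - max 0 (s - t + 1)) % 2 : ℤ)) : ℚ) ≤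
          pJS * (k : ℚ) + pI * ((⌊(1 + ((s + t : ℤ) : ℚ) - (k : ℚ)) / 2⌋ : ℤ) : ℚ) +
            pJSc * (((1 - (s + t - k) % 2 : ℤ)) : ℚ)) ∧
    (s < t → max 0 (s - t + 1) = 0) :=
  stmt_19_general pI pJS pJSc h1 h2 s t
end
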